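/- arXiv:2008.03047 — 2 statements merged into one kernel-verified Lean document; each statement's English description precedes it below -/
import Mathlib

section
/- For every nonzero ξ ∈ ℝ³, the 4×3 matrix b(ξ) with upper 3×3 block r(ξ)μ₀^{-1/2} and bottom row ξᵗ μ₀^{1/2} has rank 3, where μ₀ is a symmetric positive definite real 3×3 matrix and r(ξ) is the cross-product matrix. -/
open Matrix

/-- The cross-product matrix `r(ξ)`, satisfying `r(ξ) v = ξ × v`. -/
def crossMatrix (ξ : Fin 3 → ℝ) : Matrix (Fin 3) (Fin 3) ℝ :=
  !![0, -ξ 2, ξ 1; ξ 2, 0, -ξ 0; -ξ 1, ξ 0, 0]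

/-- The `4×3` symbol `b(ξ)` with upper `3×3` block `r(ξ) μ₀^{-1/2}` and bottom row
`ξᵗ μ₀^{1/2}`, where `s = μ₀^{1/2}`. -/
noncomputable def symbolB (s : Matrix (Fin 3) (Fin 3) ℝ) (ξ : Fin 3 → ℝ) : Matrix (Fin 4) (Fin 3) ℝ :=
  Matrix.of fun i j =>
    if h : (i : ℕ) < 3 then (crossMatrix ξ * s⁻¹) ⟨i, h⟩ j else (ξ ᵥ* s) j

/-! The kernel of the top block `r(ξ) s⁻¹` is spanned by `s ξ`, while the bottom row `ξᵗ s` is,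
for symmetric `s`, the functional `v ↦ ⟪s ξ, v⟫`. Since `s ξ ≠ 0`, that functional does not vanish
on the kernel of the top block, so `b(ξ)` is injective. -/

theorem Matrix.rank_eq_card_of_mulVec_eq_zero {m n K : Type*} [Field K] [Fintype m] [Fintype n]
    (A : Matrix m n K) (h : ∀ v, A *ᵥ v = 0 → v = 0) : A.rank = Fintype.card n := by
  have hinj : Function.Injective A.mulVecLin :=
    LinearMap.ker_eq_bot.mp (ker_mulVecLin_eq_bot_iff.mpr h)
  rw [rank, LinearMap.finrank_range_of_inj hinj, Module.finrank_fintype_fun_eq_card]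

theorem exists_smul_eq_of_cross_eq_zero {F : Type*} [Field F] {v w : Fin 3 → F} (hv : v ≠ 0)
    (h : v ⨯₃ w = 0) : ∃ c : F, w = c • v := by
  by_contra! hw
  exact crossProduct_ne_zero_iff_linearIndependent.mpr
    ((LinearIndependent.pair_iff' hv).mpr fun c => (hw c).symm) h

theorem crossMatrix_mulVec (ξ w : Fin 3 → ℝ) : crossMatrix ξ *ᵥ w = ξ ⨯₃ w := by
  ext i
  fin_cases i <;> simp [crossMatrix, cross_apply, mulVec, dotProduct, Fin.sum_univ_three] <;> ring

section symbolB

variable (s : Matrix (Fin 3) (Fin 3) ℝ) (ξ v : Fin 3 → ℝ)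

theorem symbolB_mulVec_castSucc (i : Fin 3) :
    (symbolB s ξ *ᵥ v) i.castSucc = (ξ ⨯₃ (s⁻¹ *ᵥ v)) i := by
  rw [← crossMatrix_mulVec, mulVec_mulVec]
  simp [symbolB, mulVec, dotProduct]

theorem symbolB_mulVec_last : (symbolB s ξ *ᵥ v) (Fin.last 3) = (ξ ᵥ* s) ⬝ᵥ v := by
  simp [symbolB, mulVec, dotProduct]

variable {s ξ v}

theorem eq_zero_of_symbolB_mulVec_eq_zero (hs : IsUnit s.det) (hsymm : s.IsSymm) (hξ : ξ ≠ 0)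
    (hv : symbolB s ξ *ᵥ v = 0) : v = 0 := by
  have htop : ξ ⨯₃ (s⁻¹ *ᵥ v) = 0 := by
    ext i
    rw [← symbolB_mulVec_castSucc, hv, Pi.zero_apply, Pi.zero_apply]
  obtain ⟨c, hc⟩ := exists_smul_eq_of_cross_eq_zero hξ htop
  have hv_eq : v = c • (s *ᵥ ξ) := by
    rw [← mulVec_smul, ← hc, mulVec_mulVec, mul_nonsing_inv s hs, one_mulVec]
  have hbot : (s *ᵥ ξ) ⬝ᵥ v = 0 := by
    rw [← vecMul_transpose, hsymm.eq, ← symbolB_mulVec_last, hv, Pi.zero_apply]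
  have hsξ : s *ᵥ ξ ≠ 0 := by
    simpa using (mulVec_injective_of_isUnit ((isUnit_iff_isUnit_det s).mpr hs)).ne hξ
  rw [hv_eq, dotProduct_smul, smul_eq_mul, mul_eq_zero] at hbot
  rcases hbot with rfl | hself
  · rw [hv_eq, zero_smul]
  · exact absurd (dotProduct_self_eq_zero.mp hself) hsξ

end symbolB

theorem symbolB_rank_general (s : Matrix (Fin 3) (Fin 3) ℝ)
    (hs : s.PosDef) (hssymm : s.IsSymm)
    (ξ : Fin 3 → ℝ) (hξ : ξ ≠ 0) :
    (symbolB s ξ).rank = 3 :=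
  (symbolB s ξ).rank_eq_card_of_mulVec_eq_zero fun _ =>
    eq_zero_of_symbolB_mulVec_eq_zero (isUnit_iff_ne_zero.mpr hs.det_pos.ne') hssymm hξ

/-- for every nonzero `ξ ∈ ℝ³`, the matrix `b(ξ)` has rank `3`, where
`μ₀ = s * s` is symmetric positive definite with symmetric positive definite square
root `s`. -/
theorem symbolB_rank (μ₀ s : Matrix (Fin 3) (Fin 3) ℝ)
    (hμ₀ : μ₀.PosDef) (hμ₀symm : μ₀.IsSymm)
    (hs : s.PosDef) (hssymm : s.IsSymm) (hsq : s * s = μ₀)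
    (ξ : Fin 3 → ℝ) (hξ : ξ ≠ 0) :
    (symbolB s ξ).rank = 3 :=
  symbolB_rank_general s hs hssymm ξ hξ
end

section
/- Let η(x) be a Γ-periodic symmetric positive definite matrix function with η, η⁻¹ ∈ L∞, and suppose each column l_j(x) of η(x)⁻¹ has the form l_j(x) = ∇φ_j(x) + l_j⁰ with φ_j ∈ H̃¹(Ω) periodic and l_j⁰ ∈ ℝ³ constant. Then the effective matrix equals the harmonic mean: η⁰ = (⨍_Ω η(x)⁻¹ dx)⁻¹, and moreover the matrix η̃(x) := η(x)(Σ∘(x)+1) is constant equal to η⁰. -/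
/-!
Fix a column `j` and let `w = η⁰ e_j`, the mean of the flux `u = η(∇Φ_j + e_j)`. Because the
columns of `η⁻¹` are admissible gradients plus constants, `η⁻¹ w` is one too, hence so is
`z = ∇Φ_j + e_j - η⁻¹ w = g + b`, and `η z = u - w`. The cell equation kills `∫ u ⬝ g`, the
mean-zero property of `g` gives `∫ u ⬝ b = w ⬝ b = ∫ w ⬝ (g + b)`, so `∫ η z ⬝ z = 0` and
coercivity forces `z = 0` a.e. Thus the flux is the constant `w`, and averaging `z = 0`
gives `b = 0`, i.e. `(⨍ η⁻¹) η⁰ e_j = e_j`.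
-/

open Matrix MeasureTheory

section Coercive

variable {ι : Type*} [Fintype ι] {A : Matrix ι ι ℝ} {c : ℝ}

theorem eq_zero_of_coercive_of_energy_nonpos (hc : 0 < c)
    (hcoer : ∀ v, c * ∑ i, v i ^ 2 ≤ (A *ᵥ v) ⬝ᵥ v) {v : ι → ℝ}
    (hv : (A *ᵥ v) ⬝ᵥ v ≤ 0) : v = 0 := by
  have hsq : ∑ i, v i ^ 2 ≤ 0 := nonpos_of_mul_nonpos_right ((hcoer v).trans hv) hc
  rw [← dotProduct_self_eq_zero]
  simpa only [dotProduct, sq] using le_antisymm hsq (by positivity)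

theorem isUnit_of_coercive [DecidableEq ι] (hc : 0 < c)
    (hcoer : ∀ v, c * ∑ i, v i ^ 2 ≤ (A *ᵥ v) ⬝ᵥ v) : IsUnit A := by
  refine mulVec_injective_iff_isUnit.1 fun v w hvw => sub_eq_zero.1 ?_
  refine eq_zero_of_coercive_of_energy_nonpos hc hcoer (le_of_eq ?_)
  rw [mulVec_sub, hvw, sub_self, zero_dotProduct]

end Coercive

section Integrals

variable {Ω : Type*} [MeasurableSpace Ω] {μ : Measure Ω}

theorem integral_add_const_apply_of_integral_eq_zero {ι : Type*} [IsProbabilityMeasure μ]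
    {u : Ω → ι → ℝ}
    (hu : ∀ i, Integrable (fun x => u x i) μ) (hu0 : ∀ i, ∫ x, u x i ∂μ = 0) (b : ι → ℝ) (i : ι) :
    ∫ x, (u x + b) i ∂μ = b i := by
  simp only [Pi.add_apply]
  rw [integral_add (hu i) (integrable_const _), hu0 i, integral_const]
  simp

variable {ι : Type*} [Fintype ι] {u : Ω → ι → ℝ}

theorem integrable_dotProduct_const (hu : ∀ i, Integrable (fun x => u x i) μ) (b : ι → ℝ) :
    Integrable (fun x => u x ⬝ᵥ b) μ :=
  integrable_finsetSum _ fun i _ => (hu i).mul_const _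

theorem integral_dotProduct_const (hu : ∀ i, Integrable (fun x => u x i) μ) (b : ι → ℝ) :
    ∫ x, u x ⬝ᵥ b ∂μ = (fun i => ∫ x, u x i ∂μ) ⬝ᵥ b := by
  simp only [dotProduct]
  rw [integral_finsetSum _ fun i _ => (hu i).mul_const _]
  simp only [integral_mul_const]

theorem ae_eq_zero_of_coercive_of_integral_energy_eq_zero {A : Ω → Matrix ι ι ℝ} {c : ℝ}
    (hc : 0 < c) (hcoer : ∀ x v, c * ∑ i, v i ^ 2 ≤ (A x *ᵥ v) ⬝ᵥ v)
    (hint : Integrable (fun x => (A x *ᵥ u x) ⬝ᵥ u x) μ)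
    (h0 : ∫ x, (A x *ᵥ u x) ⬝ᵥ u x ∂μ = 0) : u =ᵐ[μ] 0 := by
  have hnonneg : 0 ≤ fun x => (A x *ᵥ u x) ⬝ᵥ u x := fun x =>
    (by positivity : 0 ≤ c * ∑ i, u x i ^ 2).trans (hcoer x (u x))
  filter_upwards [(integral_eq_zero_iff_of_nonneg hnonneg hint).1 h0] with x hx
  exact eq_zero_of_coercive_of_energy_nonpos hc (hcoer x) hx.le

theorem integral_sub_mean_dotProduct_add_const_eq_zero [IsProbabilityMeasure μ] {g : Ω → ι → ℝ}
    (hu : ∀ i, Integrable (fun x => u x i) μ) (hg : ∀ i, Integrable (fun x => g x i) μ)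
    (hg0 : ∀ i, ∫ x, g x i ∂μ = 0) (hug : Integrable (fun x => u x ⬝ᵥ g x) μ)
    (horth : ∫ x, u x ⬝ᵥ g x ∂μ = 0) (b : ι → ℝ) :
    ∫ x, (u x - fun i => ∫ y, u y i ∂μ) ⬝ᵥ (g x + b) ∂μ = 0 := by
  set w : ι → ℝ := fun i => ∫ y, u y i ∂μ
  have hexpand : ∀ x, (u x - w) ⬝ᵥ (g x + b) = u x ⬝ᵥ g x + u x ⬝ᵥ b - (g x + b) ⬝ᵥ w := by
    intro x
    rw [sub_dotProduct, dotProduct_add, dotProduct_comm w]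
  have hgb : ∀ i, Integrable (fun x => (g x + b) i) μ := fun i => (hg i).add (integrable_const _)
  have hub : Integrable (fun x => u x ⬝ᵥ g x + u x ⬝ᵥ b) μ :=
    hug.add (integrable_dotProduct_const hu b)
  simp_rw [hexpand]
  rw [integral_sub hub (integrable_dotProduct_const hgb w),
    integral_add hug (integrable_dotProduct_const hu b), horth, integral_dotProduct_const hu,
    integral_dotProduct_const hgb]
  simp only [integral_add_const_apply_of_integral_eq_zero hg hg0]
  rw [dotProduct_comm b, zero_add]
  exact sub_self _

end Integrals

section CellProblem

variable {ι Ω : Type*} [Fintype ι] [DecidableEq ι] [MeasurableSpace Ω] {μ : Measure Ω}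
  [IsProbabilityMeasure μ] {A : Ω → Matrix ι ι ℝ} {G : Submodule ℝ (Ω → ι → ℝ)} {c : ℝ}

theorem flux_ae_eq_and_const_eq_of_inv_mulVec_mem_add_const
    (hc : 0 < c) (hcoer : ∀ x v, c * ∑ i, v i ^ 2 ≤ (A x *ᵥ v) ⬝ᵥ v)
    (hGint : ∀ g ∈ G, ∀ i, Integrable (fun x => g x i) μ)
    (hGmean : ∀ g ∈ G, ∀ i, ∫ x, g x i ∂μ = 0)
    (hGenergy : ∀ g ∈ G, ∀ g' ∈ G, ∀ v w : ι → ℝ,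
      Integrable (fun x => (A x *ᵥ (g x + v)) ⬝ᵥ (g' x + w)) μ)
    {p : Ω → ι → ℝ} (hp : p ∈ G) (e : ι → ℝ)
    (hcell : ∀ g ∈ G, ∫ x, (A x *ᵥ (p x + e)) ⬝ᵥ g x ∂μ = 0)
    {w : ι → ℝ} (hw : ∀ i, w i = ∫ x, (A x *ᵥ (p x + e)) i ∂μ)
    {q : Ω → ι → ℝ} (hq : q ∈ G) {a : ι → ℝ} (hinv : ∀ x, (A x)⁻¹ *ᵥ w = q x + a) :
    (∀ᵐ x ∂μ, A x *ᵥ (p x + e) = w) ∧ a = e := by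
  set u : Ω → ι → ℝ := fun x => A x *ᵥ (p x + e)
  set z : Ω → ι → ℝ := fun x => (p - q) x + (e - a)
  have hpq : p - q ∈ G := G.sub_mem hp hq
  have hw' : w = fun i => ∫ x, u x i ∂μ := funext hw
  have hAz : ∀ x, A x *ᵥ z x = u x - w := by
    intro x
    have hz : z x = (p x + e) - (A x)⁻¹ *ᵥ w := by
      rw [hinv x]
      simp only [z, Pi.sub_apply]
      abel
    rw [hz, mulVec_sub, mulVec_mulVec,
      mul_nonsing_inv _ ((isUnit_iff_isUnit_det _).1 (isUnit_of_coercive hc (hcoer x))),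
      one_mulVec]
  have hu : ∀ i, Integrable (fun x => u x i) μ := fun i => by
    simpa [u, dotProduct_single_one] using hGenergy p hp 0 G.zero_mem e (Pi.single i 1)
  have hug : Integrable (fun x => u x ⬝ᵥ (p - q) x) μ := by
    simpa using hGenergy p hp _ hpq e 0
  have hz_int : ∀ i, Integrable (fun x => z x i) μ := fun i =>
    (hGint _ hpq i).add (integrable_const _)
  have henergy_int : Integrable (fun x => (A x *ᵥ z x) ⬝ᵥ z x) μ := by
    simp_rw [hAz, sub_dotProduct, dotProduct_comm w]
    exact (hGenergy p hp _ hpq e (e - a)).sub (integrable_dotProduct_const hz_int w)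
  have henergy : ∫ x, (A x *ᵥ z x) ⬝ᵥ z x ∂μ = 0 := by
    simp_rw [hAz, hw']
    exact integral_sub_mean_dotProduct_add_const_eq_zero hu (hGint _ hpq) (hGmean _ hpq) hug
      (hcell _ hpq) _
  have hz : z =ᵐ[μ] 0 :=
    ae_eq_zero_of_coercive_of_integral_energy_eq_zero hc hcoer henergy_int henergy
  refine ⟨?_, ?_⟩
  · filter_upwards [hz] with x hx
    have h := hAz x
    rw [hx, Pi.zero_apply, mulVec_zero] at h
    exact sub_eq_zero.1 h.symm
  · funext i
    have hmean :=
      integral_add_const_apply_of_integral_eq_zero (hGint _ hpq) (hGmean _ hpq) (e - a) i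
    rw [integral_congr_ae (hz.mono fun x hx => congrFun hx i)] at hmean
    simpa [sub_eq_zero, eq_comm] using hmean

end CellProblem

/-- The cell is modelled by a probability space `(Ω, μ)`, `G` is the subspace of admissible
periodic gradient fields, `gradΦ j = ∇Φ_j` solve the cell problems weakly, and
`η₀ i j = ⨍_Ω (η(x)(∇Φ_j(x) + e_j))_i dx`; the constancy of `η̃ = η(Σ∘ + 1)` is stated
columnwise. -/
theorem effective_matrix_eq_harmonic_mean_general
    {Ω : Type*} [MeasurableSpace Ω] (μ : Measure Ω) [IsProbabilityMeasure μ]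
    (η : Ω → Matrix (Fin 3) (Fin 3) ℝ)
    (c C : ℝ) (hc : 0 < c)
    (hbound : ∀ x v, c * (∑ i, v i ^ 2) ≤ (η x *ᵥ v) ⬝ᵥ v
      ∧ (η x *ᵥ v) ⬝ᵥ v ≤ C * (∑ i, v i ^ 2))
    (G : Submodule ℝ (Ω → Fin 3 → ℝ))
    (hGint : ∀ g ∈ G, ∀ i, Integrable (fun x => g x i) μ)
    (hGmean : ∀ g ∈ G, ∀ i, ∫ x, g x i ∂μ = 0)
    (hGenergy : ∀ g ∈ G, ∀ g' ∈ G, ∀ v w : Fin 3 → ℝ,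
      Integrable (fun x => (η x *ᵥ (g x + v)) ⬝ᵥ (g' x + w)) μ)
    (gradΦ : Fin 3 → Ω → Fin 3 → ℝ)
    (hΦG : ∀ j, gradΦ j ∈ G)
    (hcell : ∀ j, ∀ g ∈ G,
      ∫ x, (η x *ᵥ (gradΦ j x + Pi.single j 1)) ⬝ᵥ g x ∂μ = 0)
    (η₀ : Matrix (Fin 3) (Fin 3) ℝ)
    (hη₀ : ∀ i j, η₀ i j = ∫ x, (η x *ᵥ (gradΦ j x + Pi.single j 1)) i ∂μ)
    -- the columns of `η⁻¹` are gradients plus constants: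
    (gφ : Fin 3 → Ω → Fin 3 → ℝ) (l₀ : Fin 3 → Fin 3 → ℝ)
    (hgφ : ∀ j, gφ j ∈ G)
    (hcol : ∀ j, ∀ x, (fun i => (η x)⁻¹ i j) = gφ j x + l₀ j) :
    η₀ = ((Matrix.of fun i j => ∫ x, (η x)⁻¹ i j ∂μ) : Matrix (Fin 3) (Fin 3) ℝ)⁻¹
      ∧ ∀ᵐ x ∂μ, ∀ j, η x *ᵥ (gradΦ j x + Pi.single j 1) = fun i => η₀ i j := by
  set w : Fin 3 → Fin 3 → ℝ := fun j i => η₀ i j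
  have hinv : ∀ j x, (η x)⁻¹ *ᵥ w j = (∑ k, w j k • gφ k) x + ∑ k, w j k • l₀ k := by
    intro j x
    simp only [mulVec_eq_sum, op_smul_eq_smul, Finset.sum_apply, Pi.smul_apply,
      ← Finset.sum_add_distrib, ← smul_add]
    exact Finset.sum_congr rfl fun k _ => congrArg _ (hcol k x)
  have hcolumn := fun j => flux_ae_eq_and_const_eq_of_inv_mulVec_mem_add_const hc
    (fun x v => (hbound x v).1) hGint hGmean hGenergy (hΦG j) _ (hcell j) (hη₀ · j)
    (G.sum_mem fun k _ => G.smul_mem _ (hgφ k)) (hinv j)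
  have hmean : (of fun i k => ∫ x, (η x)⁻¹ i k ∂μ) = of fun i k => l₀ k i := by
    ext i k
    rw [of_apply, of_apply, ← integral_add_const_apply_of_integral_eq_zero (hGint _ (hgφ k))
      (hGmean _ (hgφ k)) (l₀ k) i]
    simp_rw [← hcol k]
  refine ⟨(inv_eq_right_inv ?_).symm, ae_all_iff.2 fun j => (hcolumn j).1⟩
  rw [hmean]
  ext i j
  simpa [mul_apply, Finset.sum_apply, one_apply, Pi.single_apply, mul_comm] using
    congrFun (hcolumn j).2 i

/-- if each column `l_j(x)` of `η(x)⁻¹` has the form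
`l_j(x) = ∇φ_j(x) + l_j⁰` with `∇φ_j` an admissible periodic gradient (mean zero over
the cell) and `l_j⁰` constant, then the effective matrix equals the harmonic mean,
`η⁰ = (⨍_Ω η⁻¹)⁻¹`, and moreover `η̃(x) = η(x)(Σ∘(x) + 1)` is a.e. constant equal to
`η⁰` (stated columnwise: `η(x)(∇Φ_j(x) + e_j)` is the `j`-th column of `η⁰`).
The cell is modelled by a probability space `(Ω, μ)`, `G` is the subspace of admissible
periodic gradient fields, `gradΦ j = ∇Φ_j` solve the cell problems weakly, and
`η⁰ i j = ⨍_Ω (η(x)(∇Φ_j(x) + e_j))_i dx`. -/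
theorem effective_matrix_eq_harmonic_mean
    {Ω : Type*} [MeasurableSpace Ω] (μ : Measure Ω) [IsProbabilityMeasure μ]
    (η : Ω → Matrix (Fin 3) (Fin 3) ℝ)
    (hηsymm : ∀ x, (η x).IsSymm) (hηpos : ∀ x, (η x).PosDef)
    (c C : ℝ) (hc : 0 < c)
    (hbound : ∀ x v, c * (∑ i, v i ^ 2) ≤ (η x *ᵥ v) ⬝ᵥ v
      ∧ (η x *ᵥ v) ⬝ᵥ v ≤ C * (∑ i, v i ^ 2))
    (hηint : ∀ i j, Integrable (fun x => η x i j) μ)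
    (hηinvint : ∀ i j, Integrable (fun x => (η x)⁻¹ i j) μ)
    (G : Submodule ℝ (Ω → Fin 3 → ℝ))
    (hGint : ∀ g ∈ G, ∀ i, Integrable (fun x => g x i) μ)
    (hGmean : ∀ g ∈ G, ∀ i, ∫ x, g x i ∂μ = 0)
    (hGenergy : ∀ g ∈ G, ∀ g' ∈ G, ∀ v w : Fin 3 → ℝ,
      Integrable (fun x => (η x *ᵥ (g x + v)) ⬝ᵥ (g' x + w)) μ)
    (gradΦ : Fin 3 → Ω → Fin 3 → ℝ)
    (hΦG : ∀ j, gradΦ j ∈ G)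
    (hcell : ∀ j, ∀ g ∈ G,
      ∫ x, (η x *ᵥ (gradΦ j x + Pi.single j 1)) ⬝ᵥ g x ∂μ = 0)
    (η₀ : Matrix (Fin 3) (Fin 3) ℝ)
    (hη₀ : ∀ i j, η₀ i j = ∫ x, (η x *ᵥ (gradΦ j x + Pi.single j 1)) i ∂μ)
    -- the columns of `η⁻¹` are gradients plus constants:
    (gφ : Fin 3 → Ω → Fin 3 → ℝ) (l₀ : Fin 3 → Fin 3 → ℝ)
    (hgφ : ∀ j, gφ j ∈ G)
    (hcol : ∀ j, ∀ x, (fun i => (η x)⁻¹ i j) = gφ j x + l₀ j) :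
    η₀ = ((Matrix.of fun i j => ∫ x, (η x)⁻¹ i j ∂μ) : Matrix (Fin 3) (Fin 3) ℝ)⁻¹
      ∧ ∀ᵐ x ∂μ, ∀ j, η x *ᵥ (gradΦ j x + Pi.single j 1) = fun i => η₀ i j :=
  effective_matrix_eq_harmonic_mean_general μ η c C hc hbound G hGint hGmean hGenergy gradΦ hΦG
    hcell η₀ hη₀ gφ l₀ hgφ hcol
end
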